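/- arXiv:chao-dyn/9303006 — 7 statements merged into one kernel-verified Lean document; each statement's English description precedes it below -/
import Mathlib

section
/- A factor of a dynamical system with chaotic limits has chaotic limits: if φ : (X,f) → (Y,g) is a surjective homomorphism of dynamical systems and (X,f) has chaotic limits, then (Y,g) has chaotic limits. -/
open Set Function Topology

/-- The ω-limit set of a set `A` under `f`: `ω(A) = ⋂ₙ closure (⋃_{m>n} f^m(A))`. -/
def omegaSet {X : Type*} [TopologicalSpace X] (f : X → X) (A : Set X) : Set X :=
  ⋂ n : ℕ, closure (⋃ m : ℕ, ⋃ _ : n < m, f^[m] '' A)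

/-- A dynamical system is chaotic if its periodic points are dense and it is
topologically transitive. -/
def IsChaotic {X : Type*} [TopologicalSpace X] (f : X → X) : Prop :=
  Dense {x : X | ∃ n : ℕ, 0 < n ∧ f^[n] x = x} ∧
  ∀ U V : Set X, IsOpen U → IsOpen V → U.Nonempty → V.Nonempty →
    ∃ k : ℕ, 0 < k ∧ (f^[k] '' U ∩ V).Nonempty

/-- `f` restricted to the invariant set `S` is a chaotic dynamical system. -/
def ChaoticOn {X : Type*} [TopologicalSpace X] (f : X → X) (S : Set X) : Prop :=
  ∃ h : MapsTo f S S, IsChaotic (MapsTo.restrict f S S h)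

/-- A system has chaotic limits if every point belongs to a set whose ω-limit set is
a chaotic system. -/
def HasChaoticLimits {X : Type*} [TopologicalSpace X] (f : X → X) : Prop :=
  ∀ x : X, ∃ A : Set X, x ∈ A ∧ ChaoticOn f (omegaSet f A)

/-!
By compactness of `X`, `φ` is a closed map and carries the decreasing intersection defining
`ω(A)` onto the intersection of the images, so `φ (ω_f A) = ω_g (φ A)`. Restricted to `ω_f A`,
`φ` is then a factor map onto `ω_g (φ A)`, and factors of chaotic systems are chaotic.
-/

theorem Function.Semiconj.dense_periodicPts {X Y : Type*} [TopologicalSpace X]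
    [TopologicalSpace Y] {f : X → X} {g : Y → Y} {φ : X → Y} (hc : Semiconj φ f g)
    (hφ : Continuous φ) (hs : Surjective φ) (hf : Dense (periodicPts f)) :
    Dense (periodicPts g) :=
  (hs.denseRange.dense_image hφ hf).mono hc.mapsTo_periodicPts.image_subset

theorem Function.Semiconj.isChaotic {X Y : Type*} [TopologicalSpace X] [TopologicalSpace Y]
    {f : X → X} {g : Y → Y} {φ : X → Y} (hc : Semiconj φ f g) (hφ : Continuous φ)
    (hs : Surjective φ) (hf : IsChaotic f) : IsChaotic g := by
  refine ⟨hc.dense_periodicPts hφ hs hf.1, fun U V hU hV hUne hVne => ?_⟩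
  obtain ⟨k, hk, _, ⟨x, hxU, rfl⟩, hxV⟩ := hf.2 (φ ⁻¹' U) (φ ⁻¹' V) (hU.preimage hφ)
    (hV.preimage hφ) (hUne.preimage hs) (hVne.preimage hs)
  exact ⟨k, hk, g^[k] (φ x), ⟨φ x, hxU, rfl⟩, hc.iterate_right k x ▸ hxV⟩

theorem ChaoticOn.image {X Y : Type*} [TopologicalSpace X] [TopologicalSpace Y]
    {f : X → X} {g : Y → Y} {φ : X → Y} {S : Set X} (hc : Semiconj φ f g)
    (hφ : Continuous φ) (hS : ChaoticOn f S) : ChaoticOn g (φ '' S) := by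
  obtain ⟨hfS, hchaos⟩ := hS
  have hres : Semiconj ((mapsTo_image φ S).restrict φ S (φ '' S)) (hfS.restrict f S S)
      ((hc.mapsTo_image hfS).restrict g (φ '' S) (φ '' S)) :=
    fun x => Subtype.ext (hc x)
  exact ⟨hc.mapsTo_image hfS,
    hres.isChaotic (hφ.restrict _) (surjective_mapsTo_image_restrict φ S) hchaos⟩

theorem image_iInter_of_directed_of_isClosed {X Y ι : Type*} [TopologicalSpace X]
    [CompactSpace X] [TopologicalSpace Y] [T1Space Y] [Nonempty ι] {φ : X → Y}
    (hφ : Continuous φ) {K : ι → Set X} (hK : Directed (· ⊇ ·) K)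
    (hKcl : ∀ i, IsClosed (K i)) : φ '' ⋂ i, K i = ⋂ i, φ '' K i := by
  refine (image_iInter_subset K φ).antisymm fun y hy => ?_
  have hfiber : ∀ i, IsClosed (K i ∩ φ ⁻¹' {y}) := fun i =>
    (hKcl i).inter (isClosed_singleton.preimage hφ)
  obtain ⟨x, hx⟩ := IsCompact.nonempty_iInter_of_directed_nonempty_isCompact_isClosed
    (fun i => K i ∩ φ ⁻¹' {y})
    (fun i j => (hK i j).imp fun _ ⟨hi, hj⟩ => ⟨inter_subset_inter_left _ hi,
      inter_subset_inter_left _ hj⟩)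
    (mem_iInter.mp hy)
    (fun i => (hfiber i).isCompact) hfiber
  rw [mem_iInter] at hx
  exact ⟨x, mem_iInter.mpr fun i => (hx i).1, (hx (Classical.arbitrary ι)).2⟩

theorem omegaSet_image {X Y : Type*} [TopologicalSpace X] [CompactSpace X]
    [TopologicalSpace Y] [T2Space Y] {f : X → X} {g : Y → Y} {φ : X → Y}
    (hc : Semiconj φ f g) (hφ : Continuous φ) (A : Set X) :
    omegaSet g (φ '' A) = φ '' omegaSet f A := by
  have htail (n : ℕ) :
      φ '' ⋃ m, ⋃ _ : n < m, f^[m] '' A = ⋃ m, ⋃ _ : n < m, g^[m] '' (φ '' A) := by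
    simp only [image_iUnion, image_image, (hc.iterate_right _).eq]
  have hanti : Antitone fun n => closure (⋃ m, ⋃ _ : n < m, f^[m] '' A) :=
    fun n k hnk => closure_mono <| iUnion₂_mono' fun m hm => ⟨m, hnk.trans_lt hm, le_rfl⟩
  rw [omegaSet, omegaSet, image_iInter_of_directed_of_isClosed hφ hanti.directed_ge
    fun _ => isClosed_closure]
  simp only [← htail, hφ.isClosedMap.closure_image_eq_of_continuous hφ]

theorem hasChaoticLimits_of_factor_general {X Y : Type*} [MetricSpace X] [CompactSpace X]
    [MetricSpace Y] (f : X → X) (g : Y → Y) (φ : X → Y)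
    (hφ : Continuous φ)
    (hsurj : Function.Surjective φ) (hcomm : g ∘ φ = φ ∘ f)
    (hlim : HasChaoticLimits f) : HasChaoticLimits g := by
  have hc : Semiconj φ f g := fun x => (congrFun hcomm x).symm
  intro y
  obtain ⟨x, rfl⟩ := hsurj y
  obtain ⟨A, hxA, hchaos⟩ := hlim x
  refine ⟨φ '' A, mem_image_of_mem φ hxA, ?_⟩
  rw [omegaSet_image hc hφ A]
  exact hchaos.image hc hφ

/-- A factor of a system with chaotic limits has chaotic limits. -/
theorem hasChaoticLimits_of_factor {X Y : Type*} [MetricSpace X] [CompactSpace X]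
    [MetricSpace Y] [CompactSpace Y] (f : X → X) (g : Y → Y) (φ : X → Y)
    (hf : Continuous f) (hg : Continuous g) (hφ : Continuous φ)
    (hsurj : Function.Surjective φ) (hcomm : g ∘ φ = φ ∘ f)
    (hlim : HasChaoticLimits f) : HasChaoticLimits g :=
  hasChaoticLimits_of_factor_general f g φ hφ hsurj hcomm hlim
end

section
/- Every dynamical system on a nonempty compact metric space is a factor of a dynamical system on the Cantor space: for every continuous map g : Y → Y on a nonempty compact metric space Y there exist a continuous map f : 2^ℕ → 2^ℕ on the Cantor space 2^ℕ = {0,1}^ℕ (with the product topology) and a continuous surjection φ : 2^ℕ → Y such that φ ∘ f = g ∘ φ. -/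
open Set Function Topology

/-!
By the Hausdorff–Alexandroff theorem there is a continuous surjection `π` from the Cantor space
onto `Y`. The sequences `x : ℕ → 2^ℕ` with `π (x (n + 1)) = g (π (x n))` form a closed subset `S`
of `(2^ℕ)^ℕ ≃ₜ 2^ℕ`, invariant under the shift, and `x ↦ π (x 0)` maps the shift on `S` onto
`g`. Finally, a continuous retraction `r` of the Cantor space onto the closed set `S` extends the
shift `σ` on `S` to the map `σ ∘ r` on the whole Cantor space, of which `r` is a factor map.
-/

theorem exists_semiconj_retraction_of_isClosed {E : ℕ → Type*} [∀ n, TopologicalSpace (E n)]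
    [∀ n, DiscreteTopology (E n)] {K : Type*} [TopologicalSpace K] (e : (∀ n, E n) ≃ₜ K)
    {S : Set K} (hS : IsClosed S) (hne : S.Nonempty) {F : S → S} (hF : Continuous F) :
    ∃ (f : (∀ n, E n) → ∀ n, E n) (r : (∀ n, E n) → S),
      Continuous f ∧ Continuous r ∧ Surjective r ∧ Semiconj r f F := by
  obtain ⟨ρ, hρ_id, hρ_surj, hρ⟩ := PiNat.exists_retraction_subtype_of_isClosed
    (hS.preimage e.continuous) (hne.preimage e.surjective)
  let r := S.restrictPreimage e ∘ ρ
  refine ⟨e.symm ∘ Subtype.val ∘ F ∘ r, r, by fun_prop, e.continuous.restrictPreimage.comp hρ,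
    (S.restrictPreimage_surjective e.surjective).comp hρ_surj, fun x => ?_⟩
  have hmem : e.symm (F (r x)) ∈ e ⁻¹' S := by simp
  have hfix : ρ (e.symm (F (r x))) = ⟨_, hmem⟩ := hρ_id ⟨_, hmem⟩
  ext
  change e (ρ (e.symm (F (r x)))) = (F (r x) : K)
  simp [hfix]

section OrbitLifts

variable {C Y : Type*}

def orbitLifts (π : C → Y) (g : Y → Y) : Set (ℕ → C) :=
  {x | ∀ n, π (x (n + 1)) = g (π (x n))}

variable {π : C → Y} {g : Y → Y}

theorem isClosed_orbitLifts [TopologicalSpace C] [TopologicalSpace Y] [T2Space Y]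
    (hπ : Continuous π) (hg : Continuous g) : IsClosed (orbitLifts π g) := by
  simp only [orbitLifts, ofPred_forall]
  exact isClosed_iInter fun n => isClosed_eq (by fun_prop) (by fun_prop)

namespace orbitLifts

def shift (x : orbitLifts π g) : orbitLifts π g :=
  ⟨fun n => x.1 (n + 1), fun n => x.2 (n + 1)⟩

def head (x : orbitLifts π g) : Y :=
  π (x.1 0)

theorem continuous_shift [TopologicalSpace C] :
    Continuous (shift : orbitLifts π g → orbitLifts π g) := by
  have h : Continuous fun (x : orbitLifts π g) (n : ℕ) => x.1 (n + 1) :=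
    continuous_pi fun n => (continuous_apply (n + 1)).comp continuous_subtype_val
  exact h.subtype_mk _

theorem continuous_head [TopologicalSpace C] [TopologicalSpace Y] (hπ : Continuous π) :
    Continuous (head : orbitLifts π g → Y) :=
  hπ.comp ((continuous_apply 0).comp continuous_subtype_val)

theorem semiconj_head_shift : Semiconj (head : orbitLifts π g → Y) shift g :=
  fun x => x.2 0

theorem head_surjective (hπ : Surjective π) : Surjective (head : orbitLifts π g → Y) := by
  intro y
  choose x hx using fun n => hπ (g^[n] y)
  refine ⟨⟨x, fun n => ?_⟩, by simp [head, hx]⟩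
  rw [hx, hx, iterate_succ_apply']

end orbitLifts

end OrbitLifts

/-- Every dynamical system on a nonempty compact metric space is a factor of a
dynamical system on the Cantor space `2^ℕ = {0,1}^ℕ`. -/
theorem factor_of_cantor_system {Y : Type*} [MetricSpace Y] [CompactSpace Y]
    [Nonempty Y] (g : Y → Y) (hg : Continuous g) :
    ∃ (f : (ℕ → Fin 2) → (ℕ → Fin 2)) (φ : (ℕ → Fin 2) → Y),
      Continuous f ∧ Continuous φ ∧ Function.Surjective φ ∧ φ ∘ f = g ∘ φ := by
  obtain ⟨π, hπ, hπ_surj⟩ := exists_nat_bool_continuous_surjective_of_compact Y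
  have h_head_surj := orbitLifts.head_surjective (g := g) hπ_surj
  let e : (ℕ → Fin 2) ≃ₜ (ℕ → ℕ → Bool) :=
    (Homeomorph.piCongrRight fun _ => finTwoEquiv.toHomeomorphOfDiscrete).trans
      cantorSpaceHomeomorphNatToCantorSpace
  obtain ⟨f, r, hf, hr, hr_surj, hr_semiconj⟩ := exists_semiconj_retraction_of_isClosed e
    (isClosed_orbitLifts hπ hg) (nonempty_coe_sort.mp h_head_surj.nonempty)
    orbitLifts.continuous_shift
  exact ⟨f, orbitLifts.head ∘ r, hf, (orbitLifts.continuous_head hπ).comp hr,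
    h_head_surj.comp hr_surj, (hr_semiconj.trans orbitLifts.semiconj_head_shift).comp_eq⟩
end

section
/- Every subshift of finite type is a factor of a finite automaton: let A be a nonempty finite alphabet and M : A × A → {0,1} a matrix such that for every a ∈ A there exists b ∈ A with M(a,b) = 1. Let Σ_M = {u ∈ A^ℕ : ∀ i ≥ 0, M(u_i,u_{i+1}) = 1} with the shift map σ(u)_i = u_{i+1}. Then there exist finite sets A', Q, B, functions f_A : Q × A' → Q, f_B : Q → B, and a continuous surjection φ from the finite automaton (X,f) over (A',Q,B) onto (Σ_M,σ) with σ ∘ φ = φ ∘ f. -/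
open Set Function Topology

/-- The discontinuum over `A, Q, B`: two-sided sequences with letters from `A` at
positive coordinates, a letter from `Q` at coordinate `0`, and letters from `B` at
negative coordinates. -/
def Discontinuum (A Q B : Type*) : Type _ :=
  {u : ℤ → A ⊕ Q ⊕ B //
    (∀ i : ℤ, 0 < i → ∃ a : A, u i = Sum.inl a) ∧
    (∃ q : Q, u 0 = Sum.inr (Sum.inl q)) ∧
    (∀ i : ℤ, i < 0 → ∃ b : B, u i = Sum.inr (Sum.inr b))}

/-- The topology of the discontinuum: the product topology of the discrete topologies,
i.e. the topology of the metric ρ(u,v) = 2^{-inf{i ≥ 0 : uᵢ ≠ vᵢ or u₋ᵢ ≠ v₋ᵢ}}. -/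
instance (A Q B : Type*) : TopologicalSpace (Discontinuum A Q B) := by
  letI : TopologicalSpace (A ⊕ Q ⊕ B) := ⊥
  unfold Discontinuum
  infer_instance

/-- The inner state of the automaton, i.e. the coordinate `u 0`. -/
noncomputable def Discontinuum.state {A Q B : Type*} (u : Discontinuum A Q B) : Q :=
  u.2.2.1.choose

/-- The next input symbol, i.e. the coordinate `u 1`. -/
noncomputable def Discontinuum.input {A Q B : Type*} (u : Discontinuum A Q B) : A :=
  (u.2.1 1 one_pos).choose

/-- The dynamical system of a finite automaton with input function `fA` and output
function `fB`: it reads a symbol from the input tape, changes its state, and writes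
a symbol to the output tape. -/
noncomputable def autMap {A Q B : Type*} (fA : Q × A → Q) (fB : Q → B)
    (u : Discontinuum A Q B) : Discontinuum A Q B :=
  ⟨fun i =>
    if i = -1 then Sum.inr (Sum.inr (fB u.state))
    else if i = 0 then Sum.inr (Sum.inl (fA (u.state, u.input)))
    else u.1 (i + 1), by
      refine ⟨fun i hi => ?_, ?_, fun i hi => ?_⟩
      · beta_reduce
        rw [if_neg (by omega), if_neg (by omega)]
        exact u.2.1 (i + 1) (by omega)
      · exact ⟨fA (u.state, u.input), by beta_reduce; rw [if_neg (by norm_num), if_pos rfl]⟩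
      · by_cases h : i = -1
        · exact ⟨fB u.state, by beta_reduce; rw [if_pos h]⟩
        · beta_reduce
          rw [if_neg h, if_neg (by omega)]
          exact u.2.2.2 (i + 1) (by omega)⟩

/-- A dynamical system `g` is a factor of a finite automaton if there are nonempty
finite sets `A, Q, B`, input and output functions `fA, fB`, and a continuous
surjection `φ` from the corresponding finite automaton onto `(Y, g)` with
`g ∘ φ = φ ∘ f`. -/
def IsFactorOfFiniteAutomaton {Y : Type*} [TopologicalSpace Y] (g : Y → Y) : Prop :=
  ∃ (A Q B : Type) (_ : Fintype A) (_ : Fintype Q) (_ : Fintype B)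
    (_ : Nonempty A) (_ : Nonempty Q) (_ : Nonempty B)
    (fA : Q × A → Q) (fB : Q → B) (φ : Discontinuum A Q B → Y),
    Continuous φ ∧ Surjective φ ∧ g ∘ φ = φ ∘ autMap fA fB

/-! Take states, inputs and outputs to be letters of `A`. In state `q` on input `a` the automaton
moves to `a` if `M q a`, and otherwise to some fixed successor of `q`. Its sequence of states is
then always `M`-admissible, so it is a factor map onto `Σ_M`; it is onto because an admissible
`v` is the state sequence of the configuration with state `v 0` and input tape `v`, which the
automaton simply copies. -/

namespace Discontinuum

variable {A Q B : Type*}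

lemma state_spec (u : Discontinuum A Q B) : u.1 0 = Sum.inr (Sum.inl u.state) :=
  u.2.2.1.choose_spec

lemma input_spec (u : Discontinuum A Q B) : u.1 1 = Sum.inl u.input :=
  (u.2.1 1 one_pos).choose_spec

lemma state_eq_of_apply_zero {u : Discontinuum A Q B} {q : Q}
    (h : u.1 0 = Sum.inr (Sum.inl q)) : u.state = q := by
  simpa [h] using u.state_spec.symm

lemma input_eq_of_apply_one {u : Discontinuum A Q B} {a : A}
    (h : u.1 1 = Sum.inl a) : u.input = a := by
  simpa [h] using u.input_spec.symm

lemma isOpen_setOf_apply_eq (i : ℤ) (s : A ⊕ Q ⊕ B) :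
    IsOpen {u : Discontinuum A Q B | u.1 i = s} := by
  let _ : TopologicalSpace (A ⊕ Q ⊕ B) := ⊥
  have : DiscreteTopology (A ⊕ Q ⊕ B) := ⟨rfl⟩
  have hi : Continuous fun u : Discontinuum A Q B => u.1 i :=
    (continuous_apply i).comp continuous_subtype_val
  exact hi.isOpen_preimage {s} (isOpen_discrete _)

lemma continuous_of_finite_dependence {Y : Type*} [TopologicalSpace Y]
    {h : Discontinuum A Q B → Y} (S : Finset ℤ)
    (hS : ∀ u v : Discontinuum A Q B, (∀ i ∈ S, u.1 i = v.1 i) → h u = h v) : Continuous h := by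
  refine IsLocallyConstant.continuous ((IsLocallyConstant.iff_exists_open h).2 fun u => ?_)
  refine ⟨{v | ∀ i ∈ S, v.1 i = u.1 i}, ?_, fun i _ => rfl, fun v hv => hS v u hv⟩
  simpa only [Set.ofPred_forall] using
    isOpen_biInter_finset fun i _ => isOpen_setOf_apply_eq i (u.1 i)

lemma continuous_state [TopologicalSpace Q] :
    Continuous (state : Discontinuum A Q B → Q) :=
  continuous_of_finite_dependence {0} fun u v huv => by
    rw [state_eq_of_apply_zero ((huv 0 (Finset.mem_singleton_self 0)).trans v.state_spec)]

/-- The configuration with state `q`, input tape `w 1, w 2, …` (`w 0` is not read) and every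
output cell `b`. -/
def ofTape (q : Q) (w : ℕ → A) (b : B) : Discontinuum A Q B :=
  ⟨fun i => if i = 0 then Sum.inr (Sum.inl q)
    else if 0 < i then Sum.inl (w i.toNat) else Sum.inr (Sum.inr b), by
    refine ⟨fun i hi => ⟨w i.toNat, ?_⟩, ⟨q, rfl⟩, fun i hi => ⟨b, ?_⟩⟩
    · simp only [if_neg hi.ne', if_pos hi]
    · simp only [if_neg hi.ne, if_neg hi.not_gt]⟩

lemma state_ofTape (q : Q) (w : ℕ → A) (b : B) : (ofTape q w b).state = q :=
  state_eq_of_apply_zero rfl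

lemma ofTape_apply_of_pos (q : Q) (w : ℕ → A) (b : B) {i : ℤ} (hi : 0 < i) :
    (ofTape q w b).1 i = Sum.inl (w i.toNat) := by
  simp only [ofTape, if_neg hi.ne', if_pos hi]

end Discontinuum

open Discontinuum

section Automaton

variable {A Q B : Type*} (fA : Q × A → Q) (fB : Q → B)

lemma autMap_apply_of_pos (u : Discontinuum A Q B) {i : ℤ} (hi : 0 < i) :
    (autMap fA fB u).1 i = u.1 (i + 1) := by
  simp only [autMap, if_neg (show i ≠ -1 by omega), if_neg hi.ne']

lemma state_autMap (u : Discontinuum A Q B) :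
    (autMap fA fB u).state = fA (u.state, u.input) :=
  state_eq_of_apply_zero (by simp [autMap])

lemma continuous_autMap : Continuous (autMap fA fB : Discontinuum A Q B → Discontinuum A Q B) := by
  let _ : TopologicalSpace (A ⊕ Q ⊕ B) := ⊥
  refine (continuous_pi fun i => ?_).subtype_mk _
  refine continuous_of_finite_dependence {0, 1, i + 1} fun u v huv => ?_
  have h0 : u.state = v.state := state_eq_of_apply_zero ((huv 0 (by simp)).trans v.state_spec)
  have h1 : u.input = v.input := input_eq_of_apply_one ((huv 1 (by simp)).trans v.input_spec)
  simp only [h0, h1, huv (i + 1) (by simp)]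

lemma autMap_iterate_apply_of_pos (u : Discontinuum A Q B) (n : ℕ) {i : ℤ} (hi : 0 < i) :
    ((autMap fA fB)^[n] u).1 i = u.1 (i + n) := by
  induction n generalizing i with
  | zero => simp
  | succ n ih =>
    rw [iterate_succ_apply', autMap_apply_of_pos fA fB _ hi, ih (by omega)]
    push_cast
    ring_nf

noncomputable def stateSeq (u : Discontinuum A Q B) (n : ℕ) : Q :=
  ((autMap fA fB)^[n] u).state

lemma stateSeq_succ (u : Discontinuum A Q B) (n : ℕ) :
    stateSeq fA fB u (n + 1) = fA (stateSeq fA fB u n, ((autMap fA fB)^[n] u).input) := by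
  rw [stateSeq, iterate_succ_apply', state_autMap, stateSeq]

lemma stateSeq_autMap (u : Discontinuum A Q B) (n : ℕ) :
    stateSeq fA fB (autMap fA fB u) n = stateSeq fA fB u (n + 1) := by
  rw [stateSeq, stateSeq, iterate_succ_apply]

lemma continuous_stateSeq [TopologicalSpace Q] :
    Continuous (stateSeq fA fB : Discontinuum A Q B → ℕ → Q) :=
  continuous_pi fun n => continuous_state.comp ((continuous_autMap fA fB).iterate n)

lemma input_autMap_iterate_ofTape (q : Q) (w : ℕ → A) (b : B) (n : ℕ) :
    ((autMap fA fB)^[n] (ofTape q w b)).input = w (n + 1) :=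
  input_eq_of_apply_one <| by
    rw [autMap_iterate_apply_of_pos fA fB _ n one_pos, ofTape_apply_of_pos _ _ _ (by omega)]
    congr
    omega

end Automaton

section SubshiftOfFiniteType

variable {A : Type*} (M : A → A → Bool)

def sftSet : Set (ℕ → A) := {u | ∀ i, M (u i) (u (i + 1)) = true}

variable {M} (hM : ∀ a, ∃ b, M a b = true)

noncomputable def sftTransition (p : A × A) : A :=
  if M p.1 p.2 = true then p.2 else (hM p.1).choose

lemma sftTransition_admissible (q a : A) : M q (sftTransition hM (q, a)) = true := by
  unfold sftTransition
  split_ifs with h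
  exacts [h, (hM q).choose_spec]

lemma sftTransition_of_admissible {q a : A} (h : M q a = true) : sftTransition hM (q, a) = a :=
  if_pos h

lemma stateSeq_sftTransition_mem {B : Type*} (fB : A → B) (u : Discontinuum A A B) :
    stateSeq (sftTransition hM) fB u ∈ sftSet M := fun n => by
  rw [stateSeq_succ]
  exact sftTransition_admissible hM _ _

lemma stateSeq_sftTransition_ofTape {B : Type*} (fB : A → B) (b : B) {v : ℕ → A}
    (hv : v ∈ sftSet M) : stateSeq (sftTransition hM) fB (ofTape (v 0) v b) = v := by
  funext n
  induction n with
  | zero => exact state_ofTape _ _ _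
  | succ n ih =>
    rw [stateSeq_succ, ih, input_autMap_iterate_ofTape, sftTransition_of_admissible hM (hv n)]

end SubshiftOfFiniteType

theorem sft_isFactorOfFiniteAutomaton_general (A : Type) [Fintype A] [Nonempty A]
    [TopologicalSpace A] (M : A → A → Bool)
    (hM : ∀ a : A, ∃ b : A, M a b = true) :
    ∃ h : Set.MapsTo (fun (u : ℕ → A) (i : ℕ) => u (i + 1))
        {u : ℕ → A | ∀ i : ℕ, M (u i) (u (i + 1)) = true}
        {u : ℕ → A | ∀ i : ℕ, M (u i) (u (i + 1)) = true},
      IsFactorOfFiniteAutomaton (Set.MapsTo.restrict _ _ _ h) := by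
  let fA := sftTransition hM
  let φ : Discontinuum A A A → sftSet M :=
    Set.codRestrict (stateSeq fA id) _ (stateSeq_sftTransition_mem hM id)
  refine ⟨fun u hu i => hu (i + 1), A, A, A, inferInstance, inferInstance, inferInstance,
    inferInstance, inferInstance, inferInstance, fA, id, φ, ?_, ?_, ?_⟩
  · exact (continuous_stateSeq fA id).codRestrict _
  · rintro ⟨v, hv⟩
    exact ⟨ofTape (v 0) v (v 0), Subtype.ext (stateSeq_sftTransition_ofTape hM id _ hv)⟩
  · funext u
    exact Subtype.ext (funext fun n => (stateSeq_autMap fA id u n).symm)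

/-- A subshift of finite type is a factor of a finite automaton. -/
theorem sft_isFactorOfFiniteAutomaton (A : Type) [Fintype A] [Nonempty A]
    [TopologicalSpace A] [DiscreteTopology A] (M : A → A → Bool)
    (hM : ∀ a : A, ∃ b : A, M a b = true) :
    ∃ h : Set.MapsTo (fun (u : ℕ → A) (i : ℕ) => u (i + 1))
        {u : ℕ → A | ∀ i : ℕ, M (u i) (u (i + 1)) = true}
        {u : ℕ → A | ∀ i : ℕ, M (u i) (u (i + 1)) = true},
      IsFactorOfFiniteAutomaton (Set.MapsTo.restrict _ _ _ h) :=
  sft_isFactorOfFiniteAutomaton_general A M hM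
end

section
/- Let X be the discontinuum over nonempty finite sets (A,Q,B) and f : X → X a continuous map such that for every n > 0 the language L(f,α_n) generated by the partition α_n of X into n-cylinders is a regular language. Then (X,f) is clopen-regular, i.e. L(f,β) is regular for every finite cover β of X by clopen sets. -/
open Set Function Topology

/-- The language generated by a family `α` of subsets of `X`: all finite words
`u ∈ α*` such that some `x ∈ X` has itinerary `u`, i.e. `f^i(x) ∈ uᵢ` for `i < |u|`. -/
def genLanguage {X : Type*} (f : X → X) (α : Set (Set X)) : Language ↥α :=
  {w : List ↥α | ∃ x : X, ∀ i : Fin w.length, f^[(i : ℕ)] x ∈ (w.get i : Set X)}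

/-- A dynamical system is clopen-regular if the language generated by every finite
clopen cover is regular. -/
def ClopenRegular {X : Type*} [TopologicalSpace X] (f : X → X) : Prop :=
  ∀ α : Set (Set X), α.Finite → (∀ S ∈ α, IsClopen S) → ⋃₀ α = Set.univ →
    (genLanguage f α).IsRegular

/-- The `n`-cylinder of a point `w` of the discontinuum. -/
def cylinder {A Q B : Type*} (w : Discontinuum A Q B) (n : ℕ) :
    Set (Discontinuum A Q B) :=
  {v | ∀ i : ℤ, |i| ≤ (n : ℤ) → v.1 i = w.1 i}

/-- The partition of the discontinuum into `n`-cylinders. -/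
def cylinderPartition (A Q B : Type*) (n : ℕ) : Set (Set (Discontinuum A Q B)) :=
  {S | ∃ w : Discontinuum A Q B, S = cylinder w n}

/-!
A clopen set of the discontinuum is compact and open, hence a union of `n`-cylinders for one
`n`; taking `n` large enough for all members of a finite clopen cover `α` at once, a word is in
`L(f, α)` exactly when it is letterwise a superset of a word of `L(f, α_n)`. A finite automaton
for `L(f, α_n)` becomes a nondeterministic one for `L(f, α)` by letting it read a letter `S ∈ α`
as any `n`-cylinder contained in `S`.
-/

namespace Language

variable {α β : Type*}

def comapRel (r : α → β → Prop) (L : Language β) : Language α :=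
  {w | ∃ c ∈ L, List.Forall₂ r w c}

end Language

namespace DFA

variable {α β σ : Type*}

def comapRel (M : DFA β σ) (r : α → β → Prop) : NFA α σ where
  step s a := {t | ∃ b, r a b ∧ M.step s b = t}
  start := {M.start}
  accept := M.accept

theorem mem_evalFrom_comapRel (M : DFA β σ) (r : α → β → Prop) (S : Set σ) (w : List α)
    (t : σ) :
    t ∈ (M.comapRel r).evalFrom S w ↔ ∃ s ∈ S, ∃ c, List.Forall₂ r w c ∧ M.evalFrom s c = t := by
  induction w generalizing S with
  | nil => simp
  | cons a w ih =>
    simp only [NFA.evalFrom_cons, ih, NFA.mem_stepSet, List.forall₂_cons_left_iff]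
    constructor
    · rintro ⟨_, ⟨s, hs, b, hab, rfl⟩, c, hwc, rfl⟩
      exact ⟨s, hs, b :: c, ⟨b, c, hab, hwc, rfl⟩, rfl⟩
    · rintro ⟨s, hs, _, ⟨b, c, hab, hwc, rfl⟩, rfl⟩
      exact ⟨M.step s b, ⟨s, hs, b, hab, rfl⟩, c, hwc, rfl⟩

theorem accepts_comapRel (M : DFA β σ) (r : α → β → Prop) :
    (M.comapRel r).accepts = M.accepts.comapRel r := by
  ext w
  simp only [NFA.mem_accepts, mem_evalFrom_comapRel]
  constructor
  · rintro ⟨_, ht, s, rfl, c, hwc, rfl⟩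
    exact ⟨c, ht, hwc⟩
  · rintro ⟨c, hc, hwc⟩
    exact ⟨_, hc, M.start, rfl, c, hwc, rfl⟩

end DFA

theorem Language.IsRegular.comapRel {α β : Type*} {L : Language β} (hL : L.IsRegular)
    (r : α → β → Prop) : (L.comapRel r).IsRegular :=
  have ⟨σ, _, M, hM⟩ := hL
  ⟨Set σ, inferInstance, (M.comapRel r).toDFA,
    by rw [NFA.toDFA_correct, DFA.accepts_comapRel, hM]⟩

theorem genLanguage_eq_comapRel {X : Type*} (f : X → X) {α β : Set (Set X)}
    (hβ : ∀ a ∈ α, ∀ x ∈ a, ∃ b ∈ β, x ∈ b ∧ b ⊆ a) :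
    genLanguage f α = (genLanguage f β).comapRel fun (a : α) (b : β) => (b : Set X) ⊆ a := by
  ext w
  constructor
  · rintro ⟨x, hx⟩
    choose b hbβ hxb hba using hβ
    refine ⟨List.ofFn fun i : Fin w.length =>
      ⟨b _ (w.get i).2 _ (hx i), hbβ _ _ _ (hx i)⟩, ⟨x, fun i => ?_⟩, ?_⟩
    · simpa using hxb _ _ _ (hx (i.cast (List.length_ofFn)))
    · rw [List.forall₂_iff_get]
      exact ⟨by simp, fun i hi _ => by simpa using hba _ _ _ (hx ⟨i, hi⟩)⟩
  · rintro ⟨c, ⟨x, hx⟩, hwc⟩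
    have hlen : w.length = c.length := hwc.length_eq
    exact ⟨x, fun i => List.forall₂_iff_get.1 hwc |>.2 i i.2 (hlen ▸ i.2) (hx (i.cast hlen))⟩

section Cylinders

variable {A Q B : Type*}

theorem mem_cylinder_self (w : Discontinuum A Q B) (n : ℕ) : w ∈ cylinder w n :=
  fun _ _ => rfl

theorem cylinder_anti {w : Discontinuum A Q B} {m n : ℕ} (h : m ≤ n) :
    cylinder w n ⊆ cylinder w m :=
  fun _ hv i hi => hv i (hi.trans (by exact_mod_cast h))

theorem cylinder_subset_of_mem {w v : Discontinuum A Q B} {n : ℕ} (h : v ∈ cylinder w n) :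
    cylinder v n ⊆ cylinder w n :=
  fun _ hu i hi => (hu i hi).trans (h i hi)

theorem Discontinuum.isClopen_setOf_apply_mem (i : ℤ) (T : Set (A ⊕ Q ⊕ B)) :
    IsClopen {u : Discontinuum A Q B | u.1 i ∈ T} := by
  let : TopologicalSpace (A ⊕ Q ⊕ B) := ⊥
  have : DiscreteTopology (A ⊕ Q ⊕ B) := ⟨rfl⟩
  exact (isClopen_discrete T).preimage ((continuous_apply i).comp continuous_subtype_val)

theorem isOpen_cylinder (w : Discontinuum A Q B) (n : ℕ) : IsOpen (cylinder w n) := by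
  have h : cylinder w n = ⋂ i ∈ Finset.Icc (-(n : ℤ)) n, {v | v.1 i ∈ ({w.1 i} : Set _)} := by
    ext v
    simp [cylinder, abs_le]
  rw [h]
  exact isOpen_biInter_finset fun i _ => (Discontinuum.isClopen_setOf_apply_mem i _).isOpen

theorem exists_cylinder_subset {U : Set (Discontinuum A Q B)} (hU : IsOpen U)
    {x : Discontinuum A Q B} (hx : x ∈ U) : ∃ n : ℕ, cylinder x n ⊆ U := by
  let : TopologicalSpace (A ⊕ Q ⊕ B) := ⊥
  obtain ⟨V, hV, rfl⟩ := isOpen_induced_iff.mp hU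
  obtain ⟨I, u, hu, hIu⟩ := isOpen_pi_iff.mp hV x.1 hx
  refine ⟨I.sup Int.natAbs, fun v hv => hIu fun i hi => ?_⟩
  rw [hv i (Int.abs_eq_natAbs i ▸ Int.ofNat_le.2 (Finset.le_sup hi))]
  exact (hu i hi).2

theorem isOpen_setOf_cylinder_subset (S : Set (Discontinuum A Q B)) (n : ℕ) :
    IsOpen {x | cylinder x n ⊆ S} :=
  isOpen_iff_forall_mem_open.2 fun x hx =>
    ⟨cylinder x n, fun _ hy => (cylinder_subset_of_mem hy).trans hx, isOpen_cylinder x n,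
      mem_cylinder_self x n⟩

instance Discontinuum.instCompactSpace [Finite A] [Finite Q] [Finite B] :
    CompactSpace (Discontinuum A Q B) := by
  let : TopologicalSpace (A ⊕ Q ⊕ B) := ⊥
  have : DiscreteTopology (A ⊕ Q ⊕ B) := ⟨rfl⟩
  have hcoord (i : ℤ) (p : A ⊕ Q ⊕ B → Prop) : IsClosed {u : ℤ → A ⊕ Q ⊕ B | p (u i)} :=
    (isClosed_discrete {s | p s}).preimage (continuous_apply i)
  refine isCompact_iff_compactSpace.mp (IsClosed.isCompact ?_)
  show IsClosed {u : ℤ → A ⊕ Q ⊕ B | _ ∧ _ ∧ _}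
  convert (isClosed_iInter fun i => isClosed_iInter fun _ => hcoord i (∃ a, · = .inl a)).inter
    ((hcoord 0 (∃ q, · = .inr (.inl q))).inter
      (isClosed_iInter fun i => isClosed_iInter fun _ => hcoord i (∃ b, · = .inr (.inr b))))
    using 2
  ext u
  simp only [mem_inter_iff, mem_iInter, mem_ofPred_eq]
  rfl

theorem eventually_forall_cylinder_subset [Finite A] [Finite Q] [Finite B]
    {S : Set (Discontinuum A Q B)} (hS : IsClopen S) :
    ∀ᶠ n in Filter.atTop, ∀ x ∈ S, cylinder x n ⊆ S := by
  obtain ⟨N, hN⟩ := hS.isClosed.isCompact.elim_directed_cover _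
    (isOpen_setOf_cylinder_subset S)
    (fun x hx => mem_iUnion.2 (exists_cylinder_subset hS.isOpen hx))
    (Monotone.directed_le fun _ _ hmn _ hx => (cylinder_anti hmn).trans hx)
  exact Filter.eventually_atTop.2 ⟨N, fun n hn x hx => (cylinder_anti hn).trans (hN hx)⟩

end Cylinders

theorem clopenRegular_of_cylinders_general (A Q B : Type)
    [Fintype A] [Fintype Q] [Fintype B]
    (f : Discontinuum A Q B → Discontinuum A Q B)
    (hreg : ∀ n : ℕ, 0 < n → (genLanguage f (cylinderPartition A Q B n)).IsRegular) :
    ClopenRegular f := by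
  intro α hα hclopen _
  obtain ⟨n, hn, hαn⟩ := ((Filter.eventually_gt_atTop 0).and ((hα.eventually_all).2
    fun S hS => eventually_forall_cylinder_subset (hclopen S hS))).exists
  have hrefine : ∀ S ∈ α, ∀ x ∈ S, ∃ C ∈ cylinderPartition A Q B n, x ∈ C ∧ C ⊆ S :=
    fun S hS x hx => ⟨cylinder x n, ⟨x, rfl⟩, mem_cylinder_self x n, hαn S hS x hx⟩
  rw [genLanguage_eq_comapRel f hrefine]
  exact (hreg n hn).comapRel _

/-- If the language generated by the partition of `n`-cylinders is regular for each
`n > 0`, then the dynamical system on the discontinuum is clopen-regular. -/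
theorem clopenRegular_of_cylinders (A Q B : Type)
    [Fintype A] [Fintype Q] [Fintype B] [Nonempty A] [Nonempty Q] [Nonempty B]
    (f : Discontinuum A Q B → Discontinuum A Q B) (hf : Continuous f)
    (hreg : ∀ n : ℕ, 0 < n → (genLanguage f (cylinderPartition A Q B n)).IsRegular) :
    ClopenRegular f :=
  clopenRegular_of_cylinders_general A Q B f hreg
end

section
/- A factor of a clopen-regular dynamical system is clopen-regular: if φ : (X,f) → (Y,g) is a surjective homomorphism of dynamical systems and (X,f) is clopen-regular, then (Y,g) is clopen-regular. -/
open Set Function Topology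

/-
A factor map `φ` turns itineraries of `y = φ x` with respect to a cover `α` of `Y` into
itineraries of `x` with respect to the pulled-back cover `φ⁻¹α`, and every itinerary of the
factor arises this way because `φ` is onto. Hence the language of `(g, α)` is the inverse image
of the language of `(f, φ⁻¹α)` under the letter-to-letter map `S ↦ φ⁻¹ S`, and inverse images of
regular languages under alphabet maps are regular (run the DFA on the translated input).
-/

theorem Language.IsRegular.preimage_map {T T' : Type*} {L : Language T} (hL : L.IsRegular)
    (e : T' → T) : Language.IsRegular (T := T') (List.map e ⁻¹' L) := by
  obtain ⟨σ, hσ, M, rfl⟩ := hL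
  exact ⟨σ, hσ, M.comap e, M.accepts_comap e⟩

theorem mem_genLanguage_iff {X : Type*} {f : X → X} {α : Set (Set X)} {w : List α} :
    w ∈ genLanguage f α ↔ ∃ x, ∀ (i : ℕ) (hi : i < w.length), f^[i] x ∈ (w[i] : Set X) :=
  exists_congr fun _ => ⟨fun h i hi => h ⟨i, hi⟩, fun h i => h i i.2⟩

theorem genLanguage_eq_preimage_map_preimage {X Y : Type*} {f : X → X} {g : Y → Y}
    {φ : X → Y} (hφ : Semiconj φ f g) (hsurj : Surjective φ) (α : Set (Set Y)) :
    genLanguage g α = List.map (imageFactorization (preimage φ) α) ⁻¹'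
      genLanguage f (preimage φ '' α) := by
  ext w
  have hitin : ∀ (x : X) (i : ℕ) (hi : i < w.length),
      f^[i] x ∈ ((w.map (imageFactorization (preimage φ) α))[i]'(by simpa using hi) : Set X) ↔
        g^[i] (φ x) ∈ (w[i] : Set Y) := by
    intro x i hi
    simp [imageFactorization, (hφ.iterate_right i).eq x]
  change _ ↔ w.map _ ∈ genLanguage f _
  simp only [mem_genLanguage_iff, List.length_map]
  constructor
  · rintro ⟨y, hy⟩
    obtain ⟨x, rfl⟩ := hsurj y
    exact ⟨x, fun i hi => (hitin x i hi).2 (hy i hi)⟩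
  · rintro ⟨x, hx⟩
    exact ⟨φ x, fun i hi => (hitin x i hi).1 (hx i hi)⟩

theorem sUnion_image_preimage_eq_univ {X Y : Type*} {φ : X → Y} {α : Set (Set Y)}
    (hα : ⋃₀ α = univ) : ⋃₀ (preimage φ '' α) = univ := by
  rw [sUnion_image, ← preimage_sUnion, hα, preimage_univ]

theorem clopenRegular_of_factor_general {X Y : Type*} [MetricSpace X]
    [MetricSpace Y] (f : X → X) (g : Y → Y) (φ : X → Y) (hφ : Continuous φ)
    (hsurj : Function.Surjective φ) (hcomm : g ∘ φ = φ ∘ f)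
    (hreg : ClopenRegular f) : ClopenRegular g := by
  intro α hfin hclopen hcover
  have hsemiconj : Semiconj φ f g := fun x => (congrFun hcomm x).symm
  rw [genLanguage_eq_preimage_map_preimage hsemiconj hsurj α]
  refine (hreg _ (hfin.image _) ?_ (sUnion_image_preimage_eq_univ hcover)).preimage_map _
  rintro _ ⟨S, hS, rfl⟩
  exact (hclopen S hS).preimage hφ

/-- A factor of a clopen-regular dynamical system is clopen-regular. -/
theorem clopenRegular_of_factor {X Y : Type*} [MetricSpace X] [CompactSpace X]
    [MetricSpace Y] [CompactSpace Y] (f : X → X) (g : Y → Y) (φ : X → Y)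
    (hf : Continuous f) (hg : Continuous g) (hφ : Continuous φ)
    (hsurj : Function.Surjective φ) (hcomm : g ∘ φ = φ ∘ f)
    (hreg : ClopenRegular f) : ClopenRegular g :=
  clopenRegular_of_factor_general f g φ hφ hsurj hcomm hreg
end

section
/- Every finite automaton is clopen-regular: for any finite automaton (X,f) over nonempty finite sets (A,Q,B), the language L(f,α) is regular for every finite cover α of X by clopen sets. -/
open Set Function Topology

/-!
A clopen subset of the compact discontinuum depends on finitely many coordinates, so for a finite
clopen cover `α` there is a radius `N` such that membership in each set of `α` can be read off the
window `(u₋N, …, u_N)`. Along an orbit these windows form a one-step Markov chain: the window of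
`f u` is determined by the window of `u` and the input letter `u_{N+1}`, and that letter can be
changed without affecting the earlier windows of the orbit. Hence the NFA whose states are the
finitely many windows recognises `L(f, α)`.
-/

open Filter

theorem IsClopen.exists_finite_forall_apply_eq_imp_mem_iff {X ι : Type*} {E : ι → Type*}
    [TopologicalSpace X] [CompactSpace X] [∀ i, TopologicalSpace (E i)] {S : Set X}
    (hS : IsClopen S) {g : X → ∀ i, E i} (hg : IsInducing g) :
    ∃ I : Set ι, I.Finite ∧ ∀ u v, (∀ i ∈ I, g u i = g v i) → (u ∈ S ↔ v ∈ S) := by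
  have hloc (u : X) : ∃ I : Set ι, I.Finite ∧ ∃ t : ∀ i, Set (E i),
      (∀ i, t i ∈ 𝓝 (g u i)) ∧ ∀ v, g v ∈ I.pi t → (v ∈ S ↔ u ∈ S) := by
    have hu : {v | v ∈ S ↔ u ∈ S} ∈ 𝓝 u := by
      by_cases hu : u ∈ S
      · filter_upwards [hS.isOpen.mem_nhds hu] with v hv using iff_of_true hv hu
      · filter_upwards [hS.compl.isOpen.mem_nhds hu] with v hv using iff_of_false hv hu
    rw [hg.nhds_eq_comap, mem_comap, nhds_pi] at hu
    obtain ⟨V, hV, hVS⟩ := hu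
    obtain ⟨I, hI, t, ht, htV⟩ := mem_pi.1 hV
    exact ⟨I, hI, t, ht, fun v hv => hVS (htV hv)⟩
  choose I hI t ht hIt using hloc
  obtain ⟨F, hF⟩ := CompactSpace.elim_nhds_subcover (fun u => g ⁻¹' (I u).pi (t u))
    fun u => hg.continuous.continuousAt.preimage_mem_nhds
      (set_pi_mem_nhds (hI u) fun i _ => ht u i)
  refine ⟨⋃ w ∈ F, I w, F.finite_toSet.biUnion fun w _ => hI w, fun u v huv => ?_⟩
  obtain ⟨w, hwF, huw⟩ := mem_iUnion₂.1 (hF.ge (mem_univ u))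
  have hvw : g v ∈ (I w).pi (t w) := fun i hi => huv i (mem_biUnion hwF hi) ▸ huw i hi
  rw [hIt w u huw, hIt w v hvw]

section Itinerary

variable {X : Type*} {α : Set (Set X)}

def IsItinerary (f : X → X) (x : X) (l : List α) : Prop :=
  ∀ i : Fin l.length, f^[i] x ∈ (l.get i : Set X)

theorem mem_genLanguage_iff_s10 {f : X → X} {l : List α} :
    l ∈ genLanguage f α ↔ ∃ x, IsItinerary f x l :=
  Iff.rfl

theorem isItinerary_append_singleton_iff {f : X → X} {x : X} {l : List α} {S : α} :
    IsItinerary f x (l ++ [S]) ↔ IsItinerary f x l ∧ f^[l.length] x ∈ (S : Set X) := by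
  constructor
  · intro h
    refine ⟨fun i => ?_, by simpa using h ⟨l.length, by simp⟩⟩
    simpa [List.getElem_append_left i.2] using h ⟨i, by simp⟩
  · rintro ⟨h, hS⟩ ⟨i, hi⟩
    rw [List.length_append, List.length_singleton] at hi
    rcases Nat.lt_succ_iff_lt_or_eq.1 hi with hi | rfl
    · simpa [List.getElem_append_left hi] using h ⟨i, hi⟩
    · simpa using hS

end Itinerary

section MarkovCode

variable {X C : Type*} (f : X → X) (code : X → C)

/-- The code sequences of orbits form a one-step shift of finite type: an orbit segment can be
continued by every transition `code y ↦ code (f y)` that starts at its current code. -/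
def IsMarkovCode : Prop :=
  ∀ (x y : X) (n : ℕ), code (f^[n] x) = code y →
    ∃ x', (∀ i ≤ n, code (f^[i] x') = code (f^[i] x)) ∧ code (f^[n + 1] x') = code (f y)

variable {f code}

theorem genLanguage_isRegular_of_isMarkovCode [Finite C] (hcode : IsMarkovCode f code)
    {α : Set (Set X)} (hα : ∀ S ∈ α, ∀ x y, code x = code y → (x ∈ S ↔ y ∈ S)) :
    (genLanguage f α).IsRegular := by
  let M : NFA α C :=
    { step := fun c S => {c' | ∃ y ∈ (S : Set X), code y = c ∧ code (f y) = c'}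
      start := range code
      accept := univ }
  have heval (l : List α) :
      M.eval l = {c | ∃ x, IsItinerary f x l ∧ code (f^[l.length] x) = c} := by
    induction l using List.reverseRecOn with
    | nil => ext c; simp [M, IsItinerary]
    | append_singleton l S ih =>
      ext c'
      simp only [NFA.eval_append_singleton, NFA.mem_stepSet, ih, isItinerary_append_singleton_iff]
      constructor
      · rintro ⟨_, ⟨x, hx, rfl⟩, y, hyS, hxy, rfl⟩
        obtain ⟨x', hx'x, hx'y⟩ := hcode x y l.length hxy.symm
        refine ⟨x', ⟨fun i => ?_, ?_⟩, by simpa using hx'y⟩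
        · exact (hα _ (l.get i).2 _ _ (hx'x i i.2.le)).2 (hx i)
        · exact (hα S S.2 _ _ ((hx'x _ le_rfl).trans hxy.symm)).2 hyS
      · rintro ⟨x, ⟨hx, hxS⟩, rfl⟩
        exact ⟨_, ⟨x, hx, rfl⟩, f^[l.length] x, hxS, rfl, by simp [iterate_succ_apply']⟩
  have := Fintype.ofFinite C
  refine Language.isRegular_iff.2 ⟨Set C, inferInstance, M.toDFA, ?_⟩
  ext l
  rw [NFA.toDFA_correct, NFA.mem_accepts, mem_genLanguage_iff_s10]
  change (∃ c ∈ univ, c ∈ M.eval l) ↔ _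
  simp [heval]

end MarkovCode

namespace Discontinuum

variable {A Q B : Type*}

theorem val_zero (u : Discontinuum A Q B) : u.1 0 = .inr (.inl u.state) :=
  u.2.2.1.choose_spec

theorem val_one (u : Discontinuum A Q B) : u.1 1 = .inl u.input :=
  (u.2.1 1 one_pos).choose_spec

theorem state_eq_of_val_zero_eq {u v : Discontinuum A Q B} (h : u.1 0 = v.1 0) :
    u.state = v.state := by
  simpa [val_zero] using h

theorem input_eq_of_val_one_eq {u v : Discontinuum A Q B} (h : u.1 1 = v.1 1) :
    u.input = v.input := by
  simpa [val_one] using h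

instance [Finite A] [Finite Q] [Finite B] : CompactSpace (Discontinuum A Q B) := by
  let : TopologicalSpace (A ⊕ Q ⊕ B) := ⊥
  have : DiscreteTopology (A ⊕ Q ⊕ B) := ⟨rfl⟩
  have hcoord (i : ℤ) (T : Set (A ⊕ Q ⊕ B)) : IsClosed {u : ℤ → A ⊕ Q ⊕ B | u i ∈ T} :=
    (isClosed_discrete T).preimage (continuous_apply i)
  refine (isCompact_iff_compactSpace (s := Set.ofPred _)).1 (IsClosed.isCompact ?_)
  simp only [Set.ofPred_and, Set.ofPred_forall]
  refine .inter (isClosed_iInter fun i => isClosed_iInter fun _ => ?_)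
    (.inter ?_ (isClosed_iInter fun i => isClosed_iInter fun _ => ?_))
  · exact hcoord i {s | ∃ a, s = .inl a}
  · exact hcoord 0 {s | ∃ q, s = .inr (.inl q)}
  · exact hcoord i {s | ∃ b, s = .inr (.inr b)}

def window (N : ℕ) (u : Discontinuum A Q B) : Icc (-(N : ℤ)) N → A ⊕ Q ⊕ B :=
  (Icc _ _).domRestrict u.1

theorem window_eq_window_iff {N : ℕ} {u v : Discontinuum A Q B} :
    window N u = window N v ↔ EqOn u.1 v.1 (Icc (-(N : ℤ)) N) :=
  domRestrict_eq_domRestrict_iff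

def updateInput (u : Discontinuum A Q B) (k : ℤ) (hk : 0 < k) (a : A) : Discontinuum A Q B :=
  ⟨update u.1 k (.inl a), by
    refine ⟨fun i hi => ?_, ?_, fun i hi => ?_⟩
    · rcases eq_or_ne i k with rfl | hik
      · exact ⟨a, update_self ..⟩
      · simpa [update_of_ne hik] using u.2.1 i hi
    · simpa [update_of_ne hk.ne] using u.2.2.1
    · simpa [update_of_ne (hi.trans hk).ne] using u.2.2.2 i hi⟩

theorem updateInput_val_self (u : Discontinuum A Q B) (k : ℤ) (hk : 0 < k) (a : A) :
    (u.updateInput k hk a).1 k = .inl a :=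
  update_self ..

theorem updateInput_val_of_ne (u : Discontinuum A Q B) {k : ℤ} (hk : 0 < k) (a : A) {j : ℤ}
    (hj : j ≠ k) : (u.updateInput k hk a).1 j = u.1 j :=
  update_of_ne hj ..

theorem eventually_window_eq_imp_mem_iff [Finite A] [Finite Q] [Finite B]
    {S : Set (Discontinuum A Q B)} (hS : IsClopen S) :
    ∀ᶠ N in atTop, ∀ u v, window N u = window N v → (u ∈ S ↔ v ∈ S) := by
  let : TopologicalSpace (A ⊕ Q ⊕ B) := ⊥
  obtain ⟨I, hI, hIS⟩ := hS.exists_finite_forall_apply_eq_imp_mem_iff IsInducing.subtypeVal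
  filter_upwards [(eventually_all_finite hI).2 fun i _ => eventually_ge_atTop i.natAbs]
    with N hN u v huv
  exact hIS u v fun i hi => window_eq_window_iff.1 huv ⟨by grind, by grind⟩

end Discontinuum

section autMap

variable {A Q B : Type*} (fA : Q × A → Q) (fB : Q → B)

theorem autMap_val_neg_one (u : Discontinuum A Q B) :
    (autMap fA fB u).1 (-1) = .inr (.inr (fB u.state)) := by
  simp [autMap]

theorem autMap_val_zero (u : Discontinuum A Q B) :
    (autMap fA fB u).1 0 = .inr (.inl (fA (u.state, u.input))) := by
  simp [autMap]

theorem autMap_val_of_ne (u : Discontinuum A Q B) {j : ℤ} (h₁ : j ≠ -1) (h₀ : j ≠ 0) :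
    (autMap fA fB u).1 j = u.1 (j + 1) := by
  simp [autMap, h₁, h₀]

theorem iterate_autMap_val_of_pos (u : Discontinuum A Q B) (n : ℕ) {j : ℤ} (hj : 0 < j) :
    ((autMap fA fB)^[n] u).1 j = u.1 (j + n) := by
  induction n generalizing u with
  | zero => simp
  | succ n ih =>
    rw [iterate_succ_apply, ih, autMap_val_of_ne fA fB u (by omega) (by omega)]
    push_cast
    ring_nf

theorem autMap_val_eqOn {u v : Discontinuum A Q B} {M K : ℕ}
    (h : EqOn u.1 v.1 (Icc (-(M : ℤ)) (K + 1))) :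
    EqOn (autMap fA fB u).1 (autMap fA fB v).1 (Icc (-(M : ℤ)) K) := by
  have hstate := Discontinuum.state_eq_of_val_zero_eq (h ⟨by omega, by omega⟩)
  have hinput := Discontinuum.input_eq_of_val_one_eq (h ⟨by omega, by omega⟩)
  rintro j ⟨hjM, hjK⟩
  rcases eq_or_ne j (-1) with rfl | h₁
  · rw [autMap_val_neg_one, autMap_val_neg_one, hstate]
  rcases eq_or_ne j 0 with rfl | h₀
  · rw [autMap_val_zero, autMap_val_zero, hstate, hinput]
  rw [autMap_val_of_ne fA fB u h₁ h₀, autMap_val_of_ne fA fB v h₁ h₀]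
  exact h ⟨by omega, by omega⟩

theorem iterate_autMap_val_eqOn {u v : Discontinuum A Q B} {M K : ℕ} (n : ℕ)
    (h : EqOn u.1 v.1 (Icc (-(M : ℤ)) (K + n))) :
    EqOn ((autMap fA fB)^[n] u).1 ((autMap fA fB)^[n] v).1 (Icc (-(M : ℤ)) K) := by
  induction n generalizing u v with
  | zero => simpa using h
  | succ n ih =>
    rw [iterate_succ_apply, iterate_succ_apply]
    refine ih (autMap_val_eqOn fA fB (K := K + n) ?_)
    push_cast
    rwa [add_assoc]

theorem isMarkovCode_window (N : ℕ) :
    IsMarkovCode (autMap fA fB) (Discontinuum.window N) := by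
  intro x y n hxy
  rw [Discontinuum.window_eq_window_iff] at hxy
  obtain ⟨a, ha⟩ := y.2.1 (N + 1) (by omega)
  -- Changing one input letter far out does not affect the windows up to time `n`, and
  -- brings the window of time `n + 1` to that of `autMap y`.
  set x' := x.updateInput (N + 1 + n) (by omega) a
  have hx'x : EqOn x'.1 x.1 (Icc (-(N : ℤ)) (N + n)) := fun j hj =>
    x.updateInput_val_of_ne _ a (by grind)
  have hearly (i : ℕ) (hi : i ≤ n) :
      EqOn ((autMap fA fB)^[i] x').1 ((autMap fA fB)^[i] x).1 (Icc (-(N : ℤ)) N) :=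
    iterate_autMap_val_eqOn fA fB i (hx'x.mono (Icc_subset_Icc le_rfl (by omega)))
  refine ⟨x', fun i hi => Discontinuum.window_eq_window_iff.2 (hearly i hi), ?_⟩
  rw [Discontinuum.window_eq_window_iff, iterate_succ_apply']
  refine autMap_val_eqOn fA fB fun j hj => ?_
  rcases eq_or_lt_of_le hj.2 with rfl | hjN
  · rw [iterate_autMap_val_of_pos fA fB _ _ (by omega), ha]
    exact x.updateInput_val_self _ _ a
  · exact (hearly n le_rfl ⟨hj.1, by omega⟩).trans (hxy ⟨hj.1, by omega⟩)

end autMap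

theorem finiteAutomaton_clopenRegular_general (A Q B : Type)
    [Fintype A] [Fintype Q] [Fintype B]
    (fA : Q × A → Q) (fB : Q → B) :
    ClopenRegular (autMap fA fB) := by
  intro α hα hclopen _
  obtain ⟨N, hN⟩ := ((eventually_all_finite hα).2 fun S hS =>
    Discontinuum.eventually_window_eq_imp_mem_iff (hclopen S hS)).exists
  exact genLanguage_isRegular_of_isMarkovCode (isMarkovCode_window fA fB N) hN

/-- Any finite automaton is clopen-regular. -/
theorem finiteAutomaton_clopenRegular (A Q B : Type)
    [Fintype A] [Fintype Q] [Fintype B] [Nonempty A] [Nonempty Q] [Nonempty B]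
    (fA : Q × A → Q) (fB : Q → B) :
    ClopenRegular (autMap fA fB) :=
  finiteAutomaton_clopenRegular_general A Q B fA fB
end

section
/- Let g : [-1,1] → [-1,1] be a continuous increasing function such that g(x) > x holds if and only if x ∈ (-1,1) (hence g(-1) = -1 and g(1) = 1). Then ([-1,1],g) is a factor of a finite automaton. -/
open Set Function Topology

/-!
Restricted to `[-1,1]`, `g` is an order automorphism `e` that moves every point of `(-1,1)` up,
so the orbit `eⁿ 0` (`n ∈ ℤ`) increases from `-1` to `1` and the translates `eⁿ [0, e 0]` cover
`(-1,1)`; let `ψ` parametrize `[0, e 0]` by binary sequences. The automaton has blanks and binary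
digits as letters (for inputs, states and outputs alike): a blank state stays blank, a digit state
is replaced by the input letter, and the output is the old state. A tape codes `e^{-(n+1)} (ψ b)`
with `b` read leftwards from position `n`, where `n` is the position of the last digit of the
block of digits at the head if the state is a digit, and of the first digit left of the head if
the state is blank.
A step moves the tape one cell to the left, so `n` drops by one; this is the equivariance.
Tapes whose block of digits never ends (resp. with no digit left of a blank head) code `-1`
(resp. `1`), and continuity there is the convergence of the orbit to these fixed points.
-/

open Filter

lemma Nat.exists_minimal_or_forall_not (p : ℕ → Prop) :
    (∃ k, p k ∧ ∀ i < k, ¬ p i) ∨ ∀ i, ¬ p i := by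
  classical
  by_cases h : ∃ k, p k
  · exact .inl ⟨Nat.find h, Nat.find_spec h, fun i => Nat.find_min h⟩
  · exact .inr (not_exists.1 h)

section Orbit

variable {α : Type*} [CompleteLinearOrder α] {e : α ≃o α} {x : α}

lemma OrderIso.zpow_one_add_apply (e : α ≃o α) (n : ℤ) (y : α) :
    (e ^ (1 + n)) y = e ((e ^ n) y) := by
  rw [zpow_one_add, RelIso.mul_apply]

lemma OrderIso.zpow_add_one_apply (e : α ≃o α) (n : ℤ) (y : α) :
    (e ^ (n + 1)) y = (e ^ n) (e y) := by
  rw [zpow_add_one, RelIso.mul_apply]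

lemma strictMono_zpow_apply (he : ∀ y, y ≠ ⊥ → y ≠ ⊤ → y < e y) (hx : x ≠ ⊥) (hx' : x ≠ ⊤) :
    StrictMono fun n : ℤ => (e ^ n) x := by
  refine strictMono_int_of_lt_succ fun n => ?_
  rw [add_comm, OrderIso.zpow_one_add_apply]
  exact he _ ((_root_.map_eq_bot_iff (e ^ n)).not.2 hx) ((_root_.map_eq_top_iff (e ^ n)).not.2 hx')

/-- The supremum of the orbit is a fixed point above `x`, hence `⊤`. -/
lemma iSup_zpow_apply (he : ∀ y, y ≠ ⊥ → y ≠ ⊤ → y < e y) (hx : x ≠ ⊥) :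
    ⨆ n : ℤ, (e ^ n) x = ⊤ := by
  set L := ⨆ n : ℤ, (e ^ n) x
  have hfix : e L = L := by
    simp_rw [L, OrderIso.map_iSup, ← OrderIso.zpow_one_add_apply]
    exact (Equiv.addLeft 1).iSup_comp (g := fun n => (e ^ n) x)
  have hL : L ≠ ⊥ := ne_bot_of_le_ne_bot hx (le_iSup_of_le 0 (by simp))
  by_contra hL'
  exact (he L hL hL').ne' hfix

lemma iInf_zpow_apply (he : ∀ y, y ≠ ⊥ → y ≠ ⊤ → y < e y) (hx' : x ≠ ⊤) :
    ⨅ n : ℤ, (e ^ n) x = ⊥ := by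
  set L := ⨅ n : ℤ, (e ^ n) x
  have hfix : e L = L := by
    simp_rw [L, OrderIso.map_iInf, ← OrderIso.zpow_one_add_apply]
    exact (Equiv.addLeft 1).iInf_comp (g := fun n => (e ^ n) x)
  have hL : L ≠ ⊤ := ne_top_of_le_ne_top hx' (iInf_le_of_le 0 (by simp))
  by_contra hL'
  exact (he L hL' hL).ne' hfix

lemma exists_zpow_apply_mem_Icc (he : ∀ y, y ≠ ⊥ → y ≠ ⊤ → y < e y) (hx : x ≠ ⊥) (hx' : x ≠ ⊤)
    {y : α} (hy : y ≠ ⊥) (hy' : y ≠ ⊤) : ∃ n : ℤ, (e ^ n) y ∈ Icc x (e x) := by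
  obtain ⟨N, hN⟩ := lt_iSup_iff.1 ((iSup_zpow_apply he hx).symm ▸ lt_top_iff_ne_top.2 hy')
  obtain ⟨M, hM⟩ := iInf_lt_iff.1 ((iInf_zpow_apply he hx').symm ▸ bot_lt_iff_ne_bot.2 hy)
  obtain ⟨n, hn, hmax⟩ := Int.exists_greatest_of_bdd (P := fun n => (e ^ n) x ≤ y)
    ⟨N, fun n hn => (strictMono_zpow_apply he hx hx').le_iff_le.1 (hn.trans hN.le)⟩ ⟨M, hM.le⟩
  have hlt : y < (e ^ (n + 1)) x := not_le.1 fun h => by simpa using hmax _ h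
  refine ⟨-n, ⟨?_, ?_⟩⟩
  · simpa [← RelIso.mul_apply, ← zpow_add] using (e ^ (-n)).monotone hn
  · have := (e ^ (-n)).monotone hlt.le
    rwa [← RelIso.mul_apply, ← zpow_add, neg_add_cancel_left, zpow_one] at this

end Orbit

section Decode

variable {α : Type*} [CompleteLinearOrder α] (e : α ≃o α) (ψ : (ℕ → Fin 2) → α)

def readLeft (w : ℤ → Option (Fin 2)) (n : ℤ) (j : ℕ) : Fin 2 := (w (n - j)).getD 0

def decodeAt (w : ℤ → Option (Fin 2)) (n : ℤ) : α := (e ^ (-(n + 1))) (ψ (readLeft w n))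

noncomputable def decode (w : ℤ → Option (Fin 2)) : α :=
  open Classical in
  if w 0 = none then
    if h : ∃ m : ℕ, w (-(m + 1)) ≠ none then decodeAt e ψ w (-(Nat.find h + 1)) else ⊤
  else
    if h : ∃ k : ℕ, w (k + 1) = none then decodeAt e ψ w (Nat.find h) else ⊥

def encode (b : ℕ → Fin 2) (n : ℤ) (i : ℤ) : Option (Fin 2) :=
  if i ≤ n then some (b (n - i).toNat) else none

def transition : Option (Fin 2) × Option (Fin 2) → Option (Fin 2)
  | (none, _) => none
  | (some _, a) => a

variable {e ψ} {w : ℤ → Option (Fin 2)}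

lemma decode_of_ne_none (h0 : w 0 ≠ none) {k : ℕ} (hk : w (k + 1) = none)
    (hlt : ∀ i < k, w (i + 1) ≠ none) : decode e ψ w = decodeAt e ψ w k := by
  have h : ∃ k : ℕ, w (k + 1) = none := ⟨k, hk⟩
  rw [decode, if_neg h0, dif_pos h, (Nat.find_eq_iff h).2 ⟨hk, hlt⟩]

lemma decode_eq_bot (h0 : w 0 ≠ none) (h : ∀ i : ℕ, w (i + 1) ≠ none) : decode e ψ w = ⊥ := by
  rw [decode, if_neg h0, dif_neg (not_exists.2 h)]

lemma decode_of_eq_none (h0 : w 0 = none) {m : ℕ} (hm : w (-(m + 1)) ≠ none)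
    (hlt : ∀ i < m, w (-(i + 1)) = none) : decode e ψ w = decodeAt e ψ w (-(m + 1)) := by
  have h : ∃ m : ℕ, w (-(m + 1)) ≠ none := ⟨m, hm⟩
  rw [decode, if_pos h0, dif_pos h, (Nat.find_eq_iff h).2 ⟨hm, fun i hi => not_not.2 (hlt i hi)⟩]

lemma decode_eq_top (h0 : w 0 = none) (h : ∀ i : ℕ, w (-(i + 1)) = none) : decode e ψ w = ⊤ := by
  rw [decode, if_pos h0, dif_neg (by simpa using h)]

lemma decodeAt_of_shift {w' : ℤ → Option (Fin 2)} {n : ℤ} (h : ∀ i ≤ n, w' i = w (i + 1)) :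
    decodeAt e ψ w' n = e (decodeAt e ψ w (n + 1)) := by
  have hread : readLeft w' n = readLeft w (n + 1) := funext fun j => by
    rw [readLeft, readLeft, h _ (by omega)]
    congr 2
    ring
  rw [decodeAt, decodeAt, hread, ← OrderIso.zpow_one_add_apply]
  congr 2
  ring

lemma decode_shift (h0 : w 0 ≠ none) : decode e ψ (fun i => w (i + 1)) = e (decode e ψ w) := by
  rcases Nat.exists_minimal_or_forall_not (fun k : ℕ => w (k + 1) = none) with
    ⟨k, hk, hlt⟩ | hall
  · rw [decode_of_ne_none h0 hk hlt]
    rcases k with _ | k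
    · rw [decode_of_eq_none (m := 0) (by simpa using hk) (by simpa using h0) (by simp),
        decodeAt_of_shift fun _ _ => rfl]
      norm_num
    · rw [decode_of_ne_none (k := k) (by simpa using hlt 0 (by omega))
        (by simpa [add_assoc] using hk)
        fun i hi => by simpa [add_assoc] using hlt (i + 1) (by omega),
        decodeAt_of_shift fun _ _ => rfl]
      push_cast
      rfl
  · rw [decode_eq_bot h0 hall,
      decode_eq_bot (hall 0) fun i => by simpa [add_assoc] using hall (i + 1),
      OrderIso.map_bot]

lemma decode_update_shift (h0 : w 0 = none) :
    decode e ψ (update (fun i => w (i + 1)) 0 none) = e (decode e ψ w) := by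
  have hw : ∀ i ≠ 0, update (fun i => w (i + 1)) 0 none i = w (i + 1) := fun i hi =>
    update_of_ne hi _ _
  rcases Nat.exists_minimal_or_forall_not (fun m : ℕ => w (-(m + 1)) ≠ none) with
    ⟨m, hm, hlt⟩ | hall
  · rw [decode_of_eq_none h0 hm fun i hi => not_not.1 (hlt i hi),
      decode_of_eq_none (update_self _ _ _) (m := m + 1) ?_ fun i hi => ?_,
      decodeAt_of_shift fun i hi => hw i (by omega)]
    · congr 2
    · rw [hw _ (by omega)]
      convert hm using 2
      push_cast
      ring
    · rw [hw _ (by omega)]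
      rcases i with _ | i
      · simpa using h0
      · convert not_not.1 (hlt i (by omega)) using 2
        push_cast
        ring
  · rw [decode_eq_top h0 fun i => not_not.1 (hall i),
      decode_eq_top (update_self _ _ _) fun i => ?_, OrderIso.map_top]
    rw [hw _ (by omega)]
    rcases i with _ | i
    · simpa using h0
    · convert not_not.1 (hall i) using 2
      push_cast
      ring

theorem decode_transition (w : ℤ → Option (Fin 2)) :
    decode e ψ (fun i => if i = 0 then transition (w 0, w 1) else w (i + 1)) =
      e (decode e ψ w) := by
  by_cases h0 : w 0 = none
  · convert decode_update_shift h0 using 2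
    funext i
    by_cases hi : i = 0 <;> simp [hi, h0, transition]
  · obtain ⟨d, hd⟩ := Option.ne_none_iff_exists'.1 h0
    convert decode_shift h0 using 2
    funext i
    by_cases hi : i = 0 <;> simp [hi, hd, transition]

lemma decode_encode (b : ℕ → Fin 2) (n : ℤ) : decode e ψ (encode b n) = (e ^ (-(n + 1))) (ψ b) := by
  suffices decode e ψ (encode b n) = decodeAt e ψ (encode b n) n by
    rw [this, decodeAt]
    congr
    exact funext fun j => by simp [readLeft, encode]
  obtain ⟨k, rfl⟩ | ⟨m, rfl⟩ : (∃ k : ℕ, n = k) ∨ ∃ m : ℕ, n = -(m + 1) := by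
    rcases n with k | m
    exacts [.inl ⟨k, rfl⟩, .inr ⟨m, Int.negSucc_eq m⟩]
  · refine decode_of_ne_none (k := k) (by simp [encode]) (by simp [encode]) fun i hi => ?_
    simp [encode]
    omega
  · refine decode_of_eq_none (m := m) (by simp [encode]; omega) (by simp [encode]) fun i hi => ?_
    simp [encode]
    omega

variable {x : α}

lemma surjective_decode (he : ∀ y, y ≠ ⊥ → y ≠ ⊤ → y < e y) (hx : x ≠ ⊥) (hx' : x ≠ ⊤)
    (hψ : Icc x (e x) ⊆ range ψ) : Surjective (decode e ψ) := by
  intro y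
  by_cases hy : y = ⊥
  · exact ⟨fun _ => some 0, hy ▸ decode_eq_bot (by simp) (by simp)⟩
  by_cases hy' : y = ⊤
  · exact ⟨fun _ => none, hy' ▸ decode_eq_top rfl fun _ => rfl⟩
  obtain ⟨n, hn⟩ := exists_zpow_apply_mem_Icc he hx hx' hy hy'
  obtain ⟨b, hb⟩ := hψ hn
  refine ⟨encode b (n - 1), ?_⟩
  rw [decode_encode, hb, ← RelIso.mul_apply, ← zpow_add]
  simp

lemma decodeAt_mem_Icc (hψ : ∀ b, ψ b ∈ Icc x (e x)) (n : ℤ) :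
    decodeAt e ψ w n ∈ Icc ((e ^ (-(n + 1))) x) ((e ^ (-n)) x) := by
  refine ⟨(e ^ (-(n + 1))).monotone (hψ _).1, ?_⟩
  have := (e ^ (-(n + 1))).monotone (hψ (readLeft w n)).2
  rwa [← OrderIso.zpow_add_one_apply, show -(n + 1) + 1 = -n by ring] at this

lemma decode_le_of_ne_none (he : ∀ y, y ≠ ⊥ → y ≠ ⊤ → y < e y) (hx : x ≠ ⊥) (hx' : x ≠ ⊤)
    (hψ : ∀ b, ψ b ∈ Icc x (e x)) (h0 : w 0 ≠ none) {N : ℕ} (h : ∀ i < N, w (i + 1) ≠ none) :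
    decode e ψ w ≤ (e ^ (-(N : ℤ))) x := by
  rcases Nat.exists_minimal_or_forall_not (fun k : ℕ => w (k + 1) = none) with
    ⟨k, hk, hlt⟩ | hall
  · have hNk : N ≤ k := not_lt.1 fun hkN => h k hkN hk
    rw [decode_of_ne_none h0 hk hlt]
    exact (decodeAt_mem_Icc hψ _).2.trans ((strictMono_zpow_apply he hx hx').monotone (by omega))
  · rw [decode_eq_bot h0 hall]
    exact bot_le

lemma le_decode_of_eq_none (he : ∀ y, y ≠ ⊥ → y ≠ ⊤ → y < e y) (hx : x ≠ ⊥) (hx' : x ≠ ⊤)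
    (hψ : ∀ b, ψ b ∈ Icc x (e x)) (h0 : w 0 = none) {N : ℕ} (h : ∀ i < N, w (-(i + 1)) = none) :
    (e ^ (N : ℤ)) x ≤ decode e ψ w := by
  rcases Nat.exists_minimal_or_forall_not (fun m : ℕ => w (-(m + 1)) ≠ none) with
    ⟨m, hm, hlt⟩ | hall
  · have hNm : N ≤ m := not_lt.1 fun hmN => hm (h m hmN)
    rw [decode_of_eq_none h0 hm fun i hi => not_not.1 (hlt i hi)]
    exact ((strictMono_zpow_apply he hx hx').monotone (by omega)).trans (decodeAt_mem_Icc hψ _).1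
  · rw [decode_eq_top h0 fun i => not_not.1 (hall i)]
    exact le_top

/- Continuity of `decode` for the product of discrete topologies on tapes: as `Option (Fin 2)`
carries no topology, it is phrased for tapes `v t` converging coordinatewise to `w` along `l`. -/

variable [TopologicalSpace α] [OrderTopology α] {ι : Type*} {l : Filter ι}
  {v : ι → ℤ → Option (Fin 2)}

lemma tendsto_decodeAt (hψc : Continuous ψ) (hv : ∀ i, ∀ᶠ t in l, v t i = w i) (n : ℤ) :
    Tendsto (fun t => decodeAt e ψ (v t) n) l (𝓝 (decodeAt e ψ w n)) :=
  ((e ^ _).continuous.tendsto _).comp ((hψc.tendsto _).comp (tendsto_pi_nhds.2 fun j =>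
    tendsto_const_nhds.congr' ((hv (n - j)).mono fun t ht => by simp only [readLeft, ht])))

lemma tendsto_decode_of_ne_none (he : ∀ y, y ≠ ⊥ → y ≠ ⊤ → y < e y) (hx : x ≠ ⊥) (hx' : x ≠ ⊤)
    (hψc : Continuous ψ) (hψ : ∀ b, ψ b ∈ Icc x (e x)) (hv : ∀ i, ∀ᶠ t in l, v t i = w i)
    (h0 : w 0 ≠ none) : Tendsto (fun t => decode e ψ (v t)) l (𝓝 (decode e ψ w)) := by
  have hIcc : ∀ a b : ℤ, ∀ᶠ t in l, ∀ i ∈ Icc a b, v t i = w i := fun a b =>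
    (eventually_all_finite (finite_Icc a b)).2 fun i _ => hv i
  rcases Nat.exists_minimal_or_forall_not (fun k : ℕ => w (k + 1) = none) with
    ⟨k, hk, hlt⟩ | hall
  · rw [decode_of_ne_none h0 hk hlt]
    refine (tendsto_decodeAt hψc hv _).congr' ?_
    filter_upwards [hIcc 0 (k + 1)] with t ht
    refine (decode_of_ne_none ?_ ?_ fun i hi => ?_).symm
    · rwa [ht 0 ⟨le_rfl, by omega⟩]
    · rwa [ht _ ⟨by omega, le_rfl⟩]
    · rw [ht _ ⟨by omega, by omega⟩]
      exact hlt i hi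
  · rw [decode_eq_bot h0 hall]
    refine tendsto_order.2 ⟨fun a ha => absurd ha not_lt_bot, fun a ha => ?_⟩
    obtain ⟨M, hM⟩ := iInf_lt_iff.1 ((iInf_zpow_apply he hx').symm ▸ ha)
    filter_upwards [hIcc 0 (-M).toNat] with t ht
    refine (decode_le_of_ne_none he hx hx' hψ ?_ fun i hi => ?_).trans_lt
      (((strictMono_zpow_apply he hx hx').monotone (neg_le.1 (-M).self_le_toNat)).trans_lt hM)
    · rwa [ht 0 ⟨le_rfl, by omega⟩]
    · rw [ht _ ⟨by omega, by omega⟩]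
      exact hall i

lemma tendsto_decode_of_eq_none (he : ∀ y, y ≠ ⊥ → y ≠ ⊤ → y < e y) (hx : x ≠ ⊥) (hx' : x ≠ ⊤)
    (hψc : Continuous ψ) (hψ : ∀ b, ψ b ∈ Icc x (e x)) (hv : ∀ i, ∀ᶠ t in l, v t i = w i)
    (h0 : w 0 = none) : Tendsto (fun t => decode e ψ (v t)) l (𝓝 (decode e ψ w)) := by
  have hIcc : ∀ a b : ℤ, ∀ᶠ t in l, ∀ i ∈ Icc a b, v t i = w i := fun a b =>
    (eventually_all_finite (finite_Icc a b)).2 fun i _ => hv i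
  rcases Nat.exists_minimal_or_forall_not (fun m : ℕ => w (-(m + 1)) ≠ none) with
    ⟨m, hm, hlt⟩ | hall
  · rw [decode_of_eq_none h0 hm fun i hi => not_not.1 (hlt i hi)]
    refine (tendsto_decodeAt hψc hv _).congr' ?_
    filter_upwards [hIcc (-(m + 1)) 0] with t ht
    refine (decode_of_eq_none ((ht 0 ⟨by omega, le_rfl⟩).trans h0) ?_ fun i hi => ?_).symm
    · rwa [ht _ ⟨le_rfl, by omega⟩]
    · rw [ht _ ⟨by omega, by omega⟩]
      exact not_not.1 (hlt i hi)
  · rw [decode_eq_top h0 fun i => not_not.1 (hall i)]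
    refine tendsto_order.2 ⟨fun a ha => ?_, fun a ha => absurd ha not_top_lt⟩
    obtain ⟨M, hM⟩ := lt_iSup_iff.1 ((iSup_zpow_apply he hx).symm ▸ ha)
    filter_upwards [hIcc (-M.toNat) 0] with t ht
    refine (hM.trans_le ((strictMono_zpow_apply he hx hx').monotone M.self_le_toNat)).trans_le
      (le_decode_of_eq_none he hx hx' hψ ((ht 0 ⟨by omega, le_rfl⟩).trans h0) fun i hi => ?_)
    rw [ht _ ⟨by omega, by omega⟩]
    exact not_not.1 (hall i)

theorem tendsto_decode (he : ∀ y, y ≠ ⊥ → y ≠ ⊤ → y < e y) (hx : x ≠ ⊥) (hx' : x ≠ ⊤)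
    (hψc : Continuous ψ) (hψ : ∀ b, ψ b ∈ Icc x (e x)) (hv : ∀ i, ∀ᶠ t in l, v t i = w i) :
    Tendsto (fun t => decode e ψ (v t)) l (𝓝 (decode e ψ w)) := by
  by_cases h0 : w 0 = none
  exacts [tendsto_decode_of_eq_none he hx hx' hψc hψ hv h0,
    tendsto_decode_of_ne_none he hx hx' hψc hψ hv h0]

end Decode

namespace Discontinuum

variable {A : Type*}

def word (u : Discontinuum A A A) (i : ℤ) : A := Sum.elim id (Sum.elim id id) (u.1 i)

lemma word_zero (u : Discontinuum A A A) : u.word 0 = u.state := by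
  rw [word, u.2.2.1.choose_spec]
  rfl

lemma word_one (u : Discontinuum A A A) : u.word 1 = u.input := by
  rw [word, (u.2.1 1 one_pos).choose_spec]
  rfl

lemma word_autMap (fA : A × A → A) (u : Discontinuum A A A) :
    (autMap fA id u).word = fun i => if i = 0 then fA (u.word 0, u.word 1) else u.word (i + 1) := by
  funext i
  rw [word_zero, word_one]
  simp only [word, autMap]
  split_ifs with h1 h2 <;> subst_vars
  · exact absurd h2 (by norm_num)
  · exact (word_zero u).symm
  all_goals rfl

lemma surjective_word : Surjective (word : Discontinuum A A A → ℤ → A) := by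
  intro w
  refine ⟨⟨fun i => if 0 < i then .inl (w i) else if i = 0 then .inr (.inl (w i))
    else .inr (.inr (w i)), fun i hi => ⟨w i, if_pos hi⟩, ⟨w 0, by simp⟩,
    fun i hi => ⟨w i, by simp [hi.not_gt, hi.ne]⟩⟩, funext fun i => ?_⟩
  simp only [word]
  split_ifs <;> rfl

lemma isLocallyConstant_word (i : ℤ) :
    IsLocallyConstant fun u : Discontinuum A A A => u.word i := by
  let _ : TopologicalSpace (A ⊕ A ⊕ A) := ⊥
  have : DiscreteTopology (A ⊕ A ⊕ A) := ⟨rfl⟩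
  exact (IsLocallyConstant.of_discrete _).comp_continuous
    ((continuous_apply i).comp continuous_induced_dom)

end Discontinuum

theorem isFactorOfFiniteAutomaton_of_orderIso {α : Type*} [CompleteLinearOrder α]
    [TopologicalSpace α] [OrderTopology α] {e : α ≃o α} (he : ∀ y, y ≠ ⊥ → y ≠ ⊤ → y < e y)
    {x : α} (hx : x ≠ ⊥) (hx' : x ≠ ⊤) {ψ : (ℕ → Fin 2) → α} (hψc : Continuous ψ)
    (hψ : range ψ = Icc x (e x)) : IsFactorOfFiniteAutomaton e := by
  refine ⟨Option (Fin 2), Option (Fin 2), Option (Fin 2), inferInstance, inferInstance,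
    inferInstance, ⟨none⟩, ⟨none⟩, ⟨none⟩, transition, id, fun u => decode e ψ u.word,
    continuous_iff_continuousAt.2 fun u => ?_, (surjective_decode he hx hx' hψ.ge).comp
    Discontinuum.surjective_word, funext fun u => ?_⟩
  · exact tendsto_decode he hx hx' hψc (fun b => hψ ▸ mem_range_self b)
      fun i => (Discontinuum.isLocallyConstant_word i).eventually_eq u
  · simp only [comp_apply, Discontinuum.word_autMap, decode_transition]

lemma exists_continuous_range_eq_Icc {a b : ℝ} {p q : Icc a b} (hpq : p ≤ q) :
    ∃ ψ : (ℕ → Fin 2) → Icc a b, Continuous ψ ∧ range ψ = Icc p q := by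
  have hpq' : (0 : ℝ) ≤ q - p := sub_nonneg.2 hpq
  have hmem : ∀ c : ℕ → Fin 2, (p : ℝ) + (q - p) * Real.ofDigits c ∈ Icc (p : ℝ) q := fun c => by
    have := Real.ofDigits_nonneg c
    have := Real.ofDigits_le_one c
    constructor <;> nlinarith
  refine ⟨fun c => ⟨_, Icc_subset_Icc p.2.1 q.2.2 (hmem c)⟩,
    ((Real.continuous_ofDigits.const_mul _).const_add _).subtype_mk _, ?_⟩
  ext y
  refine ⟨by rintro ⟨c, rfl⟩; exact hmem c, fun ⟨hpy, hyq⟩ => ?_⟩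
  have hpy' : (p : ℝ) ≤ y := hpy
  have hyq' : (y : ℝ) ≤ q := hyq
  obtain ⟨c, -, hc⟩ := Real.ofDigits_SurjOn one_lt_two (show ((y : ℝ) - p) / (q - p) ∈ Icc 0 1 from
    ⟨div_nonneg (by linarith) hpq', div_le_one_of_le₀ (by linarith) hpq'⟩)
  refine ⟨c, Subtype.ext ?_⟩
  change (p : ℝ) + (q - p) * Real.ofDigits c = y
  rw [hc]
  rcases hpq'.eq_or_lt with h | h
  · rw [← h]
    linarith
  · field_simp
    ring

lemma surjective_restrict_Icc {a b : ℝ} (hab : a ≤ b) {g : ℝ → ℝ} (hc : ContinuousOn g (Icc a b))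
    (hmaps : MapsTo g (Icc a b) (Icc a b)) (ha : g a = a) (hb : g b = b) :
    Surjective (hmaps.restrict g _ _) := fun y => by
  obtain ⟨z, hz, hgz⟩ := intermediate_value_Icc hab hc (by rw [ha, hb]; exact y.2)
  exact ⟨⟨z, hz⟩, Subtype.ext hgz⟩

/-- An increasing continuous map of `[-1,1]` with `g(x) > x` exactly on `(-1,1)`
is a factor of a finite automaton. -/
theorem increasing_isFactorOfFiniteAutomaton (g : ℝ → ℝ)
    (hc : ContinuousOn g (Set.Icc (-1) 1))
    (hmono : StrictMonoOn g (Set.Icc (-1) 1))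
    (hmaps : Set.MapsTo g (Set.Icc (-1) 1) (Set.Icc (-1) 1))
    (hgt : ∀ x ∈ Set.Icc (-1:ℝ) 1, (x < g x ↔ x ∈ Set.Ioo (-1:ℝ) 1)) :
    IsFactorOfFiniteAutomaton (Set.MapsTo.restrict g _ _ hmaps) := by
  have : Fact ((-1 : ℝ) ≤ 1) := ⟨by norm_num⟩
  have hle : ∀ y ∈ Icc (-1 : ℝ) 1, y ∉ Ioo (-1 : ℝ) 1 → g y ≤ y := fun y hy hy' =>
    not_lt.1 fun h => hy' ((hgt y hy).1 h)
  have hbot : g (-1) = -1 :=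
    le_antisymm (hle _ (by norm_num) (by norm_num)) (hmaps (by norm_num : (-1 : ℝ) ∈ Icc (-1) 1)).1
  have htop : g 1 = 1 := by
    have h1 : (1 : ℝ) ∈ Icc (-1) 1 := by norm_num
    refine le_antisymm (hle 1 h1 (by norm_num)) (not_lt.1 fun hlt => ?_)
    have hlo : -1 < g 1 := hbot ▸ hmono (by norm_num) h1 (by norm_num)
    exact lt_asymm ((hgt _ (hmaps h1)).2 ⟨hlo, hlt⟩) (hmono (hmaps h1) h1 hlt)
  let e := StrictMono.orderIsoOfSurjective (hmaps.restrict g _ _) (fun a b hab => hmono a.2 b.2 hab)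
    (surjective_restrict_Icc (by norm_num) hc hmaps hbot htop)
  have he : ∀ y : Icc (-1 : ℝ) 1, y ≠ ⊥ → y ≠ ⊤ → y < e y := fun y hy hy' =>
    (hgt y y.2).2 ⟨lt_of_le_of_ne y.2.1 fun h => hy (Subtype.ext h.symm),
      lt_of_le_of_ne y.2.2 fun h => hy' (Subtype.ext h)⟩
  let x : Icc (-1 : ℝ) 1 := ⟨0, by norm_num⟩
  have hx : x ≠ ⊥ := fun h => by simpa [x] using congrArg Subtype.val h
  have hx' : x ≠ ⊤ := fun h => by simpa [x] using congrArg Subtype.val h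
  obtain ⟨ψ, hψc, hψ⟩ := exists_continuous_range_eq_Icc (he x hx hx').le
  exact isFactorOfFiniteAutomaton_of_orderIso he hx hx' hψc hψ
end
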